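/- arXiv:1411.4062 — 2 statements merged into one kernel-verified Lean document; each statement's English description precedes it below -/
import Mathlib

section
/- Let Q be a finite quiver, K a field of characteristic zero, d ∈ ℕ^{Q₀}, and M ∈ R_d a representation such that the value on M of every cyclic path of Q is nilpotent. Then there exists N ∈ ℕ such that for every path α_1,…,α_m of Q of length m ≥ N, the composite linear map M_{α_m} ∘ ⋯ ∘ M_{α_1} is the zero map. -/
open Module LinearMap Set Pointwise

/-- Wedderburn-style minimal element: in a multiplication-closed submodule of
endomorphisms all of whose elements are nilpotent, if some element acts
nontrivially on `U`, there is `w` acting nontrivially on `U` with `w * a`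
acting trivially on `U` for every `a` in the submodule. -/
theorem wedderburn_min {K V : Type} [Field K] [AddCommGroup V] [Module K V]
    [FiniteDimensional K V] (A : Submodule K (Module.End K V))
    (hmul : ∀ a ∈ A, ∀ b ∈ A, a * b ∈ A) (hnil : ∀ a ∈ A, IsNilpotent a)
    (U : Submodule K V) (hU : ∃ a ∈ A, ∃ u ∈ U, a u ≠ 0) :
    ∃ w ∈ A, (∃ u ∈ U, w u ≠ 0) ∧ ∀ a ∈ A, ∀ u ∈ U, (w * a) u = 0 := by
  classical
  set rk : Module.End K V → ℕ := fun w => finrank K (A.map (LinearMap.mulLeft K w)) with hrk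
  have hex : ∃ n : ℕ, ∃ w ∈ A, (∃ u ∈ U, w u ≠ 0) ∧ rk w = n := by
    obtain ⟨a, haA, hau⟩ := hU
    exact ⟨rk a, a, haA, hau, rfl⟩
  obtain ⟨w, hwA, hwU, hwrk⟩ := Nat.find_spec hex
  refine ⟨w, hwA, hwU, ?_⟩
  intro a haA
  by_contra hcon
  push_neg at hcon
  obtain ⟨u, huU, hune⟩ := hcon
  -- `w * a` is a competitor
  have hwaA : w * a ∈ A := hmul w hwA a haA
  have hle : A.map (LinearMap.mulLeft K (w * a)) ≤ A.map (LinearMap.mulLeft K w) := by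
    rintro x ⟨y, hyA, rfl⟩
    exact ⟨a * y, hmul a haA y hyA, by simp [LinearMap.mulLeft_apply, mul_assoc]⟩
  have hgr : Nat.find hex ≤ rk (w * a) :=
    Nat.find_le ⟨w * a, hwaA, ⟨u, huU, hune⟩, rfl⟩
  have heq : A.map (LinearMap.mulLeft K (w * a)) = A.map (LinearMap.mulLeft K w) :=
    Submodule.eq_of_le_of_finrank_le hle (by show rk w ≤ rk (w * a); rw [hwrk]; exact hgr)
  have hmem : w * a ∈ A.map (LinearMap.mulLeft K (w * a)) := by
    rw [heq]; exact ⟨a, haA, rfl⟩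
  obtain ⟨b, hbA, hb⟩ := hmem
  simp only [LinearMap.mulLeft_apply] at hb
  have hiter : ∀ k : ℕ, (w * a) * b ^ k = w * a := by
    intro k
    induction k with
    | zero => simp
    | succ k ih => rw [pow_succ, ← mul_assoc, ih, hb]
  obtain ⟨m, hm⟩ := hnil b hbA
  have : w * a = 0 := by rw [← hiter m, hm, mul_zero]
  rw [this] at hune
  simp at hune

/-- Core induction: products of `n+1` elements of a nil multiplication-closed
submodule of endomorphisms kill any invariant submodule of rank at most `n`. -/
theorem nil_core {K V : Type} [Field K] [AddCommGroup V] [Module K V]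
    [FiniteDimensional K V] (A : Submodule K (Module.End K V))
    (hmul : ∀ a ∈ A, ∀ b ∈ A, a * b ∈ A) (hnil : ∀ a ∈ A, IsNilpotent a) :
    ∀ (n : ℕ) (U : Submodule K V), finrank K U ≤ n →
      (∀ a ∈ A, ∀ u ∈ U, a u ∈ U) →
      ∀ l : List (Module.End K V), (∀ x ∈ l, x ∈ A) → l.length = n + 1 →
      ∀ u ∈ U, l.prod u = 0 := by
  intro n
  induction n with
  | zero =>
    intro U hU _ l hl hlen u huU
    have hUbot : U = ⊥ := Submodule.finrank_eq_zero.mp (Nat.le_zero.mp hU)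
    subst hUbot
    obtain ⟨x, hx⟩ : ∃ x, l = [x] := List.length_eq_one_iff.mp hlen
    subst hx
    simp only [Submodule.mem_bot] at huU
    simp [huU]
  | succ m ih =>
    intro U hU hinv l hl hlen u huU
    have hlne : l ≠ [] := by intro h; simp [h] at hlen
    -- split off the last element
    have hsplit : l = l.dropLast ++ [l.getLast hlne] := (List.dropLast_append_getLast hlne).symm
    have hlast_mem : l.getLast hlne ∈ A := hl _ (List.getLast_mem hlne)
    have hdrop_mem : ∀ x ∈ l.dropLast, x ∈ A := fun x hx => hl x (List.dropLast_subset _ hx)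
    have hdrop_len : l.dropLast.length = m + 1 := by
      rw [List.length_dropLast, hlen]
      omega
    have happ : l.prod u = l.dropLast.prod ((l.getLast hlne) u) := by
      conv_lhs => rw [hsplit]
      rw [List.prod_append, List.prod_singleton]
      rfl
    by_cases hz : ∀ a ∈ A, ∀ v ∈ U, a v = 0
    · rw [happ, hz _ hlast_mem u huU, map_zero]
    · push_neg at hz
      obtain ⟨w, hwA, hwU, hwkill⟩ := wedderburn_min A hmul hnil U hz
      -- the submodule A·U
      set U' : Submodule K V := ⨆ a : A, U.map (a : Module.End K V) with hU'
      have hU'leU : U' ≤ U := by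
        refine iSup_le fun a => ?_
        rintro x ⟨v, hvU, rfl⟩
        exact hinv a a.2 v hvU
      have hU'ker : U' ≤ LinearMap.ker w := by
        refine iSup_le fun a => ?_
        rintro x ⟨v, hvU, rfl⟩
        exact LinearMap.mem_ker.mpr (hwkill a a.2 v hvU)
      have hU'ne : U' ≠ U := by
        intro h
        obtain ⟨v, hvU, hv⟩ := hwU
        exact hv (LinearMap.mem_ker.mp (hU'ker (h ▸ hvU)))
      have hU'lt : U' < U := lt_of_le_of_ne hU'leU hU'ne
      have hU'rk : finrank K U' ≤ m := by
        have := Submodule.finrank_lt_finrank_of_lt hU'lt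
        omega
      have hU'inv : ∀ a ∈ A, ∀ v ∈ U', a v ∈ U' := by
        intro a haA v hvU'
        have : Submodule.map a U' ≤ U' := by
          rw [hU', Submodule.map_iSup]
          refine iSup_le fun b => ?_
          rw [← Submodule.map_comp]
          exact le_iSup_of_le ⟨a * b, hmul a haA b b.2⟩ (le_of_eq rfl)
        exact this ⟨v, hvU', rfl⟩
      have hlastU' : (l.getLast hlne) u ∈ U' := by
        have : U.map (l.getLast hlne) ≤ U' :=
          le_iSup (fun a : A => U.map (a : Module.End K V)) ⟨l.getLast hlne, hlast_mem⟩
        exact this ⟨u, huU, rfl⟩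
      rw [happ]
      exact ih U' hU'rk hU'inv l.dropLast hdrop_mem hdrop_len _ hlastU'

/-- Products of sufficiently many elements of a nil multiplication-closed
submodule of endomorphisms vanish. -/
theorem nil_prod_eq_zero {K V : Type} [Field K] [AddCommGroup V] [Module K V]
    [FiniteDimensional K V] (A : Submodule K (Module.End K V))
    (hmul : ∀ a ∈ A, ∀ b ∈ A, a * b ∈ A) (hnil : ∀ a ∈ A, IsNilpotent a)
    (l : List (Module.End K V)) (hl : ∀ x ∈ l, x ∈ A)
    (hlen : finrank K V + 1 ≤ l.length) : l.prod = 0 := by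
  set N := finrank K V + 1 with hN
  have : l.prod = (l.take N).prod * (l.drop N).prod := by
    rw [← List.prod_append, List.take_append_drop]
  rw [this]
  have htake : (l.take N).prod = 0 := by
    ext u
    refine nil_core A hmul hnil (finrank K V) ⊤ (le_of_eq (finrank_top K V)) (fun _ _ _ _ => trivial)
      (l.take N) (fun x hx => hl x (List.take_subset _ _ hx)) ?_ u trivial
    rw [List.length_take]
    omega
  rw [htake, zero_mul]

/-- Over an algebraically closed field of characteristic zero, an endomorphism
whose power traces all vanish is nilpotent. -/
theorem isNilpotent_of_trace_pow_aux {L V : Type} [Field L] [CharZero L] [IsAlgClosed L]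
    [AddCommGroup V] [Module L V] [FiniteDimensional L V] (f : Module.End L V)
    (h : ∀ k : ℕ, k ≠ 0 → LinearMap.trace L V (f ^ k) = 0) : IsNilpotent f := by
  classical
  set N : L → Submodule L V := fun μ => f.maxGenEigenspace μ with hN
  have h_fin : {μ | N μ ≠ ⊥}.Finite :=
    WellFoundedGT.finite_ne_bot_of_iSupIndep f.independent_maxGenEigenspace
  have hds := DirectSum.isInternal_submodule_of_iSupIndep_of_iSup_eq_top
    f.independent_maxGenEigenspace f.iSup_maxGenEigenspace_eq_top
  have hmt : ∀ μ, MapsTo f (N μ) (N μ) :=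
    fun μ => f.mapsTo_maxGenEigenspace_of_comm rfl μ
  have hmtk : ∀ (k : ℕ) (μ : L), MapsTo (f ^ k) (N μ) (N μ) :=
    fun k μ => f.mapsTo_maxGenEigenspace_of_comm (Commute.pow_right rfl k) μ
  -- trace of the restriction of `f ^ k` to a generalized eigenspace
  have key : ∀ (k : ℕ) (μ : L), k ≠ 0 →
      LinearMap.trace L (N μ) ((f ^ k).restrict (hmtk k μ)) =
        μ ^ k * (finrank L (N μ) : L) := by
    intro k μ hk
    set g : Module.End L (N μ) := f.restrict (hmt μ) with hg
    have hrp : (f ^ k).restrict (hmtk k μ) = g ^ k := (Module.End.pow_restrict k _).symm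
    set c : Module.End L (N μ) := algebraMap L (Module.End L (N μ)) μ with hc
    set w : Module.End L (N μ) := (f - algebraMap L (Module.End L V) μ).restrict
      (Module.End.mapsTo_maxGenEigenspace_of_comm (Algebra.mul_sub_algebraMap_commutes f μ) μ) with hw
    have hwnil : IsNilpotent w := f.isNilpotent_restrict_maxGenEigenspace_sub_algebraMap μ
    have hgcw : g = c + w := by
      ext x
      simp only [hg, hw, hc, LinearMap.restrict_coe_apply, LinearMap.add_apply,
        LinearMap.sub_apply, Module.algebraMap_end_apply, Submodule.coe_add,
        SetLike.val_smul]
      change f x = μ • (x : V) + (f - algebraMap L (Module.End L V) μ) x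
      simp only [LinearMap.sub_apply, Module.algebraMap_end_apply]
      abel
    have hcomm : Commute c w := Algebra.commutes μ w
    rw [hrp, hgcw, Commute.add_pow hcomm, map_sum]
    rw [Finset.sum_eq_single_of_mem k (Finset.self_mem_range_succ k)]
    · simp only [Nat.sub_self, pow_zero, Nat.choose_self, Nat.cast_one, mul_one]
      rw [hc, ← map_pow]
      have : algebraMap L (Module.End L (N μ)) (μ ^ k) = (μ ^ k) • 1 := by
        rw [Algebra.algebraMap_eq_smul_one]
      rw [this, map_smul, LinearMap.trace_one, smul_eq_mul]
    · intro i hi hik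
      have h1 : IsNilpotent (w ^ (k - i)) := hwnil.pow_of_pos (by
        simp only [Finset.mem_range] at hi; omega)
      have hin : IsNilpotent (c ^ i * w ^ (k - i)) :=
        Commute.isNilpotent_mul_left (Commute.pow_pow hcomm i (k - i)) h1
      have h2 : IsNilpotent (c ^ i * w ^ (k - i) * (k.choose i : Module.End L (N μ))) :=
        (Nat.commute_cast _ _).isNilpotent_mul_right hin
      have := LinearMap.isNilpotent_trace_of_isNilpotent h2
      exact this.eq_zero
  -- global trace formula
  have htr : ∀ k : ℕ, k ≠ 0 →
      ∑ μ ∈ h_fin.toFinset, μ ^ k * (finrank L (N μ) : L) = 0 := by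
    intro k hk
    rw [← h k hk, LinearMap.trace_eq_sum_trace_restrict' hds h_fin (hmtk k)]
    exact Finset.sum_congr rfl fun μ _ => (key k μ hk).symm
  -- all nonzero eigenvalues are excluded by a Vandermonde argument
  set s : Finset L := h_fin.toFinset with hs
  set t : Finset L := s.erase 0 with ht
  have htzero : t = ∅ := by
    by_contra htne
    set m : ℕ := t.card with hm
    have e : {x // x ∈ t} ≃ Fin m := (Fintype.equivFinOfCardEq (Fintype.card_coe t))
    set v : Fin m → L := fun i => ((e.symm i : {x // x ∈ t}) : L) with hv
    have hvinj : Function.Injective v :=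
      fun i j hij => e.symm.injective (Subtype.ext hij)
    have hvne : ∀ i, v i ≠ 0 := fun i =>
      (Finset.mem_erase.mp (e.symm i).2).1
    have hvmem : ∀ i, N (v i) ≠ ⊥ := fun i => by
      have := (Finset.mem_erase.mp (e.symm i).2).2
      rw [hs, Set.Finite.mem_toFinset] at this
      exact this
    set B : Matrix (Fin m) (Fin m) L := Matrix.of fun k i => v i ^ ((k : ℕ) + 1) with hB
    have hBdet : B.det ≠ 0 := by
      have hBeq : B = (Matrix.vandermonde v).transpose * Matrix.diagonal v := by
        ext k i
        rw [Matrix.mul_diagonal]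
        simp [hB, Matrix.vandermonde, pow_succ]
      rw [hBeq, Matrix.det_mul, Matrix.det_transpose, Matrix.det_diagonal]
      exact mul_ne_zero (Matrix.det_vandermonde_ne_zero_iff.mpr hvinj)
        (Finset.prod_ne_zero_iff.mpr fun i _ => hvne i)
    set x : Fin m → L := fun i => (finrank L (N (v i)) : L) with hx
    have hmv : B.mulVec x = 0 := by
      funext k
      have h1 : B.mulVec x k = ∑ i : Fin m, v i ^ ((k : ℕ) + 1) * x i := by
        simp [Matrix.mulVec, dotProduct, hB]
      rw [h1]
      have h2 : ∑ i : Fin m, v i ^ ((k : ℕ) + 1) * x i =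
          ∑ a : {y // y ∈ t}, (a : L) ^ ((k : ℕ) + 1) * (finrank L (N (a : L)) : L) := by
        rw [← Equiv.sum_comp e.symm]
      rw [h2, Finset.sum_coe_sort t (fun μ => μ ^ ((k : ℕ) + 1) * (finrank L (N μ) : L))]
      have h3 : ∑ μ ∈ t, μ ^ ((k : ℕ) + 1) * (finrank L (N μ) : L) =
          ∑ μ ∈ s, μ ^ ((k : ℕ) + 1) * (finrank L (N μ) : L) := by
        rw [ht]
        exact Finset.sum_erase s (by simp)
      rw [h3]
      exact htr ((k : ℕ) + 1) (Nat.succ_ne_zero _)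
    have hx0 : x = 0 := Matrix.eq_zero_of_mulVec_eq_zero hBdet hmv
    obtain ⟨μ, hμ⟩ := Finset.nonempty_iff_ne_empty.mpr htne
    have : x (e ⟨μ, hμ⟩) = 0 := by rw [hx0]; rfl
    rw [hx] at this
    have h4 : finrank L (N (v (e ⟨μ, hμ⟩))) = 0 := Nat.cast_eq_zero.mp this
    exact hvmem (e ⟨μ, hμ⟩) (Submodule.finrank_eq_zero.mp h4)
  -- hence the only possibly nonzero generalized eigenspace is at 0
  have hbot : ∀ μ : L, μ ≠ 0 → N μ = ⊥ := by
    intro μ hμ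
    by_contra hne
    have hμs : μ ∈ s := by rw [hs, Set.Finite.mem_toFinset]; exact hne
    have : μ ∈ t := Finset.mem_erase.mpr ⟨hμ, hμs⟩
    rw [htzero] at this
    exact absurd this (Finset.notMem_empty μ)
  have htop : N 0 = ⊤ := by
    rw [← top_le_iff, ← f.iSup_maxGenEigenspace_eq_top]
    refine iSup_le fun μ => ?_
    rcases eq_or_ne μ 0 with rfl | hμ
    · exact le_rfl
    · rw [show f.maxGenEigenspace μ = N μ from rfl, hbot μ hμ]
      exact bot_le
  -- conclude nilpotency
  have hallv : ∀ x : V, ∃ k : ℕ, (f ^ k) x = 0 := by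
    intro x
    have hx : x ∈ N 0 := htop ▸ Submodule.mem_top
    rw [hN] at hx
    rw [Module.End.mem_maxGenEigenspace] at hx
    obtain ⟨k, hk⟩ := hx
    exact ⟨k, by simpa using hk⟩
  exact ((LinearMap.charpoly_nilpotent_tfae f).out 2 0).mp hallv

/-- Over any field of characteristic zero, an endomorphism whose power traces
all vanish is nilpotent. -/
theorem isNilpotent_of_trace_pow {K V : Type} [Field K] [CharZero K]
    [AddCommGroup V] [Module K V] [FiniteDimensional K V] (f : Module.End K V)
    (h : ∀ k : ℕ, k ≠ 0 → LinearMap.trace K V (f ^ k) = 0) : IsNilpotent f := by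
  classical
  set b := Module.Free.chooseBasis K V with hb
  set ι := Module.Free.ChooseBasisIndex K V with hι
  set E := LinearMap.toMatrixAlgEquiv b with hE
  set A : Matrix ι ι K := E f with hA
  set L := AlgebraicClosure K with hL
  have : CharZero L := charZero_of_injective_algebraMap (algebraMap K L).injective
  set φ := algebraMap K L with hφ
  set A' : Matrix ι ι L := A.map φ with hA'
  set f' : Module.End L (ι → L) := Matrix.toLinAlgEquiv' A' with hf'
  have htrA : ∀ k : ℕ, k ≠ 0 → Matrix.trace (A ^ k) = 0 := by
    intro k hk
    have h1 : A ^ k = E (f ^ k) := by rw [map_pow]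
    have h2 : LinearMap.trace K V (f ^ k) = Matrix.trace (E (f ^ k)) := by
      rw [LinearMap.trace_eq_matrix_trace K b]
      rfl
    rw [h1, ← h2]
    exact h k hk
  have htr' : ∀ k : ℕ, k ≠ 0 → LinearMap.trace L (ι → L) (f' ^ k) = 0 := by
    intro k hk
    have h1 : f' ^ k = Matrix.toLinAlgEquiv' (A' ^ k) := by rw [map_pow]
    have h2 : LinearMap.trace L (ι → L) (Matrix.toLinAlgEquiv' (A' ^ k)) =
        Matrix.trace (A' ^ k) := by
      rw [LinearMap.trace_eq_matrix_trace L (Pi.basisFun L ι),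
        LinearMap.toMatrix_eq_toMatrix']
      congr 1
      exact LinearMap.toMatrixAlgEquiv'.apply_symm_apply (A' ^ k)
    have h3 : A' ^ k = (A ^ k).map φ := by
      have h6 : (RingHom.mapMatrix φ) (A ^ k) = ((RingHom.mapMatrix φ) A) ^ k :=
        map_pow (RingHom.mapMatrix φ) A k
      rw [RingHom.mapMatrix_apply, RingHom.mapMatrix_apply] at h6
      rw [hA', h6]
    have h4 : Matrix.trace ((A ^ k).map φ) = φ (Matrix.trace (A ^ k)) := by
      simp [Matrix.trace, Matrix.diag, map_sum]
    rw [h1, h2, h3, h4, htrA k hk, map_zero]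
  have hnil' : IsNilpotent f' := isNilpotent_of_trace_pow_aux f' htr'
  have hnilA' : IsNilpotent A' := by
    have := hnil'.map (Matrix.toLinAlgEquiv' (R := L) (n := ι)).symm
    rwa [AlgEquiv.symm_apply_apply] at this
  have hnilA : IsNilpotent A := by
    obtain ⟨n, hn⟩ := hnilA'
    refine ⟨n, ?_⟩
    have h5 : (A ^ n).map φ = 0 := by
      have h6 : (RingHom.mapMatrix φ) (A ^ n) = ((RingHom.mapMatrix φ) A) ^ n :=
        map_pow (RingHom.mapMatrix φ) A n
      rw [RingHom.mapMatrix_apply, RingHom.mapMatrix_apply] at h6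
      rw [h6]
      exact hn
    ext i j
    have := congrFun (congrFun h5 i) j
    simp only [Matrix.map_apply, Matrix.zero_apply] at this ⊢
    exact (algebraMap K L).injective (by simpa using this)
  have : IsNilpotent (E.symm A) := hnilA.map E.symm
  rwa [hA, AlgEquiv.symm_apply_apply] at this

/-- The endomorphism of the total space `⊕_i K^{d_i}` induced by the linear map
of the arrow `α`: projection onto the block `s(α)`, followed by the matrix of
`α`, followed by the inclusion of the block `t(α)`. -/
noncomputable def arrowEnd {Q₀ Q₁ : Type} [DecidableEq Q₀] (src tgt : Q₁ → Q₀)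
    (K : Type) [Field K] (d : Q₀ → ℕ)
    (M : ∀ α : Q₁, Matrix (Fin (d (tgt α))) (Fin (d (src α))) K) (α : Q₁) :
    Module.End K (∀ i : Q₀, Fin (d i) → K) :=
  (LinearMap.single K (fun i : Q₀ => Fin (d i) → K) (tgt α)) ∘ₗ
    (M α).mulVecLin ∘ₗ (LinearMap.proj (src α))

/-- A path: a nonempty list of arrows such that the target of each arrow is
the source of the next one. -/
def IsPath {Q₀ Q₁ : Type} (src tgt : Q₁ → Q₀) (p : List Q₁) : Prop :=
  p ≠ [] ∧ p.Chain' fun a b => tgt a = src b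

/-- A cyclic path: a nonempty list of arrows that is chained and closes up;
this is equivalent to `p ++ p` being chained. -/
def IsCyclicPath {Q₀ Q₁ : Type} (src tgt : Q₁ → Q₀) (p : List Q₁) : Prop :=
  p ≠ [] ∧ (p ++ p).Chain' fun a b => tgt a = src b


set_option linter.unusedSectionVars false

section QuiverGlue

variable {Q₀ Q₁ : Type} [Fintype Q₀] [Fintype Q₁] [DecidableEq Q₀]
  (src tgt : Q₁ → Q₀) (K : Type) [Field K] [CharZero K] (d : Q₀ → ℕ)
  (M : ∀ α : Q₁, Matrix (Fin (d (tgt α))) (Fin (d (src α))) K)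

local notation "F" => arrowEnd src tgt K d M

/-- Composing two arrow endomorphisms whose blocks do not match gives zero. -/
theorem arrowEnd_mul_eq_zero {α β : Q₁} (h : tgt β ≠ src α) : F α * F β = 0 := by
  refine LinearMap.ext fun v => ?_
  simp only [arrowEnd, Module.End.mul_apply, LinearMap.comp_apply, LinearMap.proj_apply,
    LinearMap.coe_single, LinearMap.zero_apply]
  rw [Pi.single_eq_of_ne (Ne.symm h)]
  simp

theorem val_concat (p q : List Q₁) :
    ((p.reverse.map F).prod) * ((q.reverse.map F).prod) = (((q ++ p).reverse.map F).prod) := by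
  rw [List.reverse_append, List.map_append, List.prod_append]

theorem val_mul_eq_zero (p q : List Q₁) (hp : p ≠ []) (hq : q ≠ [])
    (h : tgt (q.getLast hq) ≠ src (p.head hp)) :
    ((p.reverse.map F).prod) * ((q.reverse.map F).prod) = 0 := by
  have hpd : (p.reverse.map F).prod
      = (p.tail.reverse.map F).prod * F (p.head hp) := by
    conv_lhs => rw [← List.cons_head_tail hp]
    rw [List.reverse_cons, List.map_append, List.prod_append]
    simp
  have hqd : (q.reverse.map F).prod
      = F (q.getLast hq) * (q.dropLast.reverse.map F).prod := by
    conv_lhs => rw [← List.dropLast_append_getLast hq]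
    rw [List.reverse_append, List.map_append, List.prod_append]
    simp
  rw [hpd, hqd, mul_assoc, ← mul_assoc (F (p.head hp)), arrowEnd_mul_eq_zero src tgt K d M h]
  simp

end QuiverGlue

theorem long_paths_vanish {Q₀ Q₁ : Type} [Fintype Q₀] [Fintype Q₁]
    [DecidableEq Q₀] (src tgt : Q₁ → Q₀) (K : Type) [Field K] [CharZero K]
    (d : Q₀ → ℕ)
    (M : ∀ α : Q₁, Matrix (Fin (d (tgt α))) (Fin (d (src α))) K)
    (hnil : ∀ p : List Q₁, IsCyclicPath src tgt p →
      IsNilpotent ((p.reverse.map (arrowEnd src tgt K d M)).prod)) :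
    ∃ N : ℕ, ∀ p : List Q₁, IsPath src tgt p → N ≤ p.length →
      (p.reverse.map (arrowEnd src tgt K d M)).prod = 0 := by
  classical
  set V := ∀ i : Q₀, Fin (d i) → K with hV
  set F := arrowEnd src tgt K d M with hF
  set val : List Q₁ → Module.End K V := fun p => (p.reverse.map F).prod with hval
  set S : Set (Module.End K V) :=
    {f | f = 0 ∨ ∃ p : List Q₁, IsPath src tgt p ∧ f = val p} with hS
  set A : Submodule K (Module.End K V) := Submodule.span K S with hA
  -- products of two path values
  have hvmul : ∀ p q : List Q₁, IsPath src tgt p → IsPath src tgt q →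
      val p * val q ∈ S := by
    intro p q hp hq
    by_cases hlink : tgt (q.getLast hq.1) = src (p.head hp.1)
    · right
      refine ⟨q ++ p, ⟨?_, ?_⟩, val_concat src tgt K d M p q⟩
      · simp [hq.1]
      · refine List.isChain_append.mpr ⟨hq.2, hp.2, ?_⟩
        intro x hx y hy
        rw [List.getLast?_eq_getLast hq.1, Option.mem_def, Option.some.injEq] at hx
        rw [List.head?_eq_head hp.1, Option.mem_def, Option.some.injEq] at hy
        rw [← hx, ← hy]
        exact hlink
    · left
      exact val_mul_eq_zero src tgt K d M p q hp.1 hq.1 hlink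
  -- every element of `S` is nilpotent
  have hSnil : ∀ x ∈ S, IsNilpotent x := by
    rintro x (rfl | ⟨p, hp, rfl⟩)
    · exact ⟨1, pow_one _⟩
    · by_cases hc : tgt (p.getLast hp.1) = src (p.head hp.1)
      · refine hnil p ⟨hp.1, List.isChain_append.mpr ⟨hp.2, hp.2, ?_⟩⟩
        intro x hx y hy
        rw [List.getLast?_eq_getLast hp.1, Option.mem_def, Option.some.injEq] at hx
        rw [List.head?_eq_head hp.1, Option.mem_def, Option.some.injEq] at hy
        rw [← hx, ← hy]
        exact hc
      · exact ⟨2, by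
          rw [pow_two]
          exact val_mul_eq_zero src tgt K d M p p hp.1 hp.1 hc⟩
  -- `A` is closed under multiplication
  have hAmul : ∀ a ∈ A, ∀ b ∈ A, a * b ∈ A := by
    intro a ha b hb
    have hmm : a * b ∈ A * A := Submodule.mul_mem_mul ha hb
    have hSS : S * S ⊆ S := by
      rintro x ⟨u, hu, v, hv, rfl⟩
      rcases hu with rfl | ⟨p, hp, rfl⟩
      · left; simp
      rcases hv with rfl | ⟨q, hq, rfl⟩
      · left; simp
      exact hvmul p q hp hq
    have : A * A ≤ A := by
      rw [hA, Submodule.span_mul_span]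
      exact Submodule.span_mono hSS
    exact this hmm
  -- the trace vanishes on `A`
  have hAtr : ∀ x ∈ A, LinearMap.trace K V x = 0 := by
    intro x hx
    induction hx using Submodule.span_induction with
    | mem y hy =>
      exact (LinearMap.isNilpotent_trace_of_isNilpotent (hSnil y hy)).eq_zero
    | zero => simp
    | add y z _ _ hy hz => rw [map_add, hy, hz, add_zero]
    | smul c y _ hy => rw [map_smul, hy, smul_zero]
  -- hence every element of `A` is nilpotent
  have hAnil : ∀ a ∈ A, IsNilpotent a := by
    intro a ha
    have hpow : ∀ k : ℕ, k ≠ 0 → a ^ k ∈ A := by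
      intro k hk
      induction k with
      | zero => exact absurd rfl hk
      | succ n ih =>
        rcases Nat.eq_zero_or_pos n with rfl | hn
        · simpa using ha
        · rw [pow_succ]
          exact hAmul _ (ih hn.ne') _ ha
    exact isNilpotent_of_trace_pow a fun k hk => hAtr _ (hpow k hk)
  -- conclude using the nil algebra lemma
  refine ⟨Module.finrank K V + 1, fun p hp hplen => ?_⟩
  have hl : ∀ x ∈ p.reverse.map F, x ∈ A := by
    intro x hx
    obtain ⟨α, _, rfl⟩ := List.mem_map.mp hx
    refine Submodule.subset_span (Or.inr ⟨[α], ⟨by simp, List.isChain_singleton _⟩, ?_⟩)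
    simp [hval]
  refine nil_prod_eq_zero A hAmul hAnil (p.reverse.map F) hl ?_
  simpa using hplen
end

section
/- Let A be a commutative ring, G a group acting on A by ring automorphisms, and A^G = { a ∈ A : g•a = a for all g ∈ G } the fixed subring. Let B be a subring of A, and let ρ : A → A be an additive map such that ρ(a) ∈ A^G for all a ∈ A, ρ(x·a) = x·ρ(a) for all x ∈ A^G and a ∈ A, ρ(1) = 1, and ρ(B) ⊆ B. If an element a ∈ A^G is integral over B, then a is integral over the subring B ∩ A^G. -/
/-!
Statement 9: Reynolds operator argument. Let a group `G` act on a commutative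
ring `A` by ring automorphisms, `B ⊆ A` a subring, and `ρ : A → A` an additive
map landing in the fixed subring `A^G`, `A^G`-linear, with `ρ(1) = 1` and
`ρ(B) ⊆ B`. If `a ∈ A^G` is integral over `B` (it satisfies a monic polynomial
with coefficients in `B`), then `a` is integral over `B ∩ A^G` (it satisfies a
monic polynomial whose coefficients lie in `B` and are `G`-fixed).
-/

theorem integral_over_fixed_subring {A : Type} [CommRing A] {G : Type} [Group G]
    [MulSemiringAction G A] (B : Subring A) (ρ : A →+ A)
    (hfix : ∀ (a : A) (g : G), g • ρ a = ρ a)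
    (hlin : ∀ x a : A, (∀ g : G, g • x = x) → ρ (x * a) = x * ρ a)
    (hone : ρ 1 = 1)
    (hB : ∀ b ∈ B, ρ b ∈ B)
    (a : A) (ha : ∀ g : G, g • a = a)
    (hint : ∃ p : Polynomial A, p.Monic ∧ (∀ n, p.coeff n ∈ B) ∧
      Polynomial.eval a p = 0) :
    ∃ p : Polynomial A, p.Monic ∧
      (∀ n, p.coeff n ∈ B ∧ ∀ g : G, g • p.coeff n = p.coeff n) ∧
      Polynomial.eval a p = 0 := by
  obtain ⟨p, hm, hpB, hev⟩ := hint
  set d := p.natDegree with hd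
  set q : Polynomial A :=
    ∑ i ∈ Finset.range (d + 1), Polynomial.C (ρ (p.coeff i)) * Polynomial.X ^ i with hq
  have hqcoeff : ∀ n, q.coeff n = if n < d + 1 then ρ (p.coeff n) else 0 := by
    intro n
    rw [hq, Polynomial.finset_sum_coeff]
    simp only [Polynomial.coeff_C_mul, Polynomial.coeff_X_pow, mul_ite, mul_one, mul_zero]
    rw [Finset.sum_ite_eq (Finset.range (d + 1)) n (fun i => ρ (p.coeff i))]
    simp [Finset.mem_range]
  have hqd : q.coeff d = 1 := by
    rw [hqcoeff d, if_pos (Nat.lt_succ_self d), hm.coeff_natDegree, hone]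
  have hqmonic : q.Monic := by
    apply Polynomial.monic_of_natDegree_le_of_coeff_eq_one d _ hqd
    rw [hq]
    apply Polynomial.natDegree_sum_le_of_forall_le
    intro i hi
    refine le_trans (Polynomial.natDegree_C_mul_le _ _) ?_
    exact le_trans (Polynomial.natDegree_X_pow_le _) (Nat.lt_succ_iff.mp (Finset.mem_range.mp hi))
  refine ⟨q, hqmonic, ?_, ?_⟩
  · intro n
    rw [hqcoeff n]
    by_cases h : n < d + 1
    · rw [if_pos h]
      exact ⟨hB _ (hpB n), fun g => hfix _ g⟩
    · rw [if_neg h]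
      exact ⟨Subring.zero_mem B, fun g => smul_zero g⟩
  · have hapow : ∀ (i : ℕ) (g : G), g • (a ^ i) = a ^ i := by
      intro i g; rw [smul_pow', ha]
    have : Polynomial.eval a q = ρ (Polynomial.eval a p) := by
      rw [hq, Polynomial.eval_finset_sum]
      rw [Polynomial.eval_eq_sum_range, map_sum]
      apply Finset.sum_congr rfl
      intro i _
      rw [Polynomial.eval_mul, Polynomial.eval_C, Polynomial.eval_pow, Polynomial.eval_X]
      rw [mul_comm (p.coeff i) (a ^ i), hlin _ _ (hapow i), mul_comm]
    rw [this, hev, map_zero]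
end
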